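/- Let u be a rational solution of the generic Painlevé-III equation with parameters (Θ₀, Θ∞), and suppose x = 0 is a pole of u (a root of its reduced denominator). Then x = 0 is a simple pole of u and the residue of u at 0 equals −Θ₀; that is, there is a function h analytic in a neighborhood of 0 such that u(x) = −Θ₀/x + h(x) for x near 0, x ≠ 0. -/

import Mathlib

open Complex Polynomial Filter Topology

/-- The generic Painlevé-III equation with parameters `(Θ0, Θinf)` holds for the
function `u` at the point `x`. -/
def PIIIat (Θ0 Θinf : ℂ) (u : ℂ → ℂ) (x : ℂ) : Prop :=
  deriv (deriv u) x =
    (deriv u x) ^ 2 / u x - deriv u x / x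
      + (4 * Θ0 * (u x) ^ 2 + 4 * (1 - Θinf)) / x
      + 4 * (u x) ^ 3 - 4 / u x

/-- The rational function `p/q` is a rational solution of the generic Painlevé-III
equation with parameters `(Θ0, Θinf)`. -/
def IsRatSolutionPIII (Θ0 Θinf : ℂ) (p q : Polynomial ℂ) : Prop :=
  p ≠ 0 ∧ q ≠ 0 ∧ ∀ x : ℂ, x ≠ 0 → p.eval x ≠ 0 → q.eval x ≠ 0 →
    PIIIat Θ0 Θinf (fun y => p.eval y / q.eval y) x

/-- The polynomial identity obtained by clearing denominators in the
Painlevé-III equation for a rational solution `p/q`. -/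
lemma PIII_poly_identity (Θ0 Θinf : ℂ) (p q : Polynomial ℂ)
    (hp : p ≠ 0) (hq : q ≠ 0)
    (hode : ∀ x : ℂ, x ≠ 0 → p.eval x ≠ 0 → q.eval x ≠ 0 →
      PIIIat Θ0 Θinf (fun y => p.eval y / q.eval y) x) :
    X * p * (derivative (derivative p * q - p * derivative q) * q
        - 2 * derivative q * (derivative p * q - p * derivative q))
      - X * (derivative p * q - p * derivative q) ^ 2
      + p * q * (derivative p * q - p * derivative q)
      - p * q * (C (4 * Θ0) * p ^ 2 + C (4 * (1 - Θinf)) * q ^ 2)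
      - 4 * X * p ^ 4 + 4 * X * q ^ 4 = 0 := by
  set N1 : Polynomial ℂ := derivative p * q - p * derivative q with hN1
  apply Polynomial.eq_zero_of_infinite_isRoot
  have hfin : ({x : ℂ | (X * p * q).IsRoot x}).Finite :=
    Polynomial.finite_setOf_isRoot (by simp [X_ne_zero, hp, hq])
  have hinf : ({x : ℂ | (X * p * q).IsRoot x}ᶜ).Infinite := by
    have := Set.Finite.infinite_compl (s := {x : ℂ | (X * p * q).IsRoot x}) hfin
    exact this
  apply Set.Infinite.mono _ hinf
  intro x hx
  simp only [Set.mem_compl_iff, Set.mem_setOf_eq, IsRoot.def, eval_mul, eval_X] at hx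
  have hx0 : x ≠ 0 := fun h => hx (by simp [h])
  have hpx : p.eval x ≠ 0 := fun h => hx (by simp [h])
  have hqx : q.eval x ≠ 0 := fun h => hx (by simp [h])
  -- first derivative
  set u : ℂ → ℂ := fun y => p.eval y / q.eval y with hu
  set v : ℂ → ℂ := fun y => N1.eval y / (q.eval y) ^ 2 with hv
  have hder : ∀ y : ℂ, q.eval y ≠ 0 → deriv u y = v y := by
    intro y hy
    have := ((p.hasDerivAt y).div (q.hasDerivAt y) hy).deriv
    rw [show u = (fun x => eval x p) / (fun x => eval x q) from rfl, this]
    simp [hv, hN1]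
  have hev : deriv u =ᶠ[𝓝 x] v := by
    have h1 : ∀ᶠ y in 𝓝 x, q.eval y ≠ 0 := (q.continuous.continuousAt).eventually_ne hqx
    exact h1.mono fun y hy => hder y hy
  have hderiv2 : deriv (deriv u) x = ((derivative N1).eval x * (q.eval x) ^ 2
      - N1.eval x * (2 * q.eval x * (derivative q).eval x)) / ((q.eval x) ^ 2) ^ 2 := by
    rw [hev.deriv_eq]
    exact ((N1.hasDerivAt x).div ((q.hasDerivAt x).pow 2) (pow_ne_zero 2 hqx)).deriv.trans
      (by simp only [Pi.pow_apply]; ring)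
  have key := hode x hx0 hpx hqx
  unfold PIIIat at key
  rw [hderiv2, hder x hqx] at key
  simp only [hv, hu] at key
  show (X * p * (derivative N1 * q - 2 * derivative q * N1) - X * N1 ^ 2 + p * q * N1
      - p * q * (C (4 * Θ0) * p ^ 2 + C (4 * (1 - Θinf)) * q ^ 2)
      - 4 * X * p ^ 4 + 4 * X * q ^ 4).IsRoot x
  simp only [IsRoot.def, eval_mul, eval_add, eval_sub, eval_pow, eval_X, eval_C,
    eval_ofNat]
  obtain ⟨a, ha0⟩ : ∃ a, eval x p = a := ⟨_, rfl⟩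
  obtain ⟨b, hb0⟩ : ∃ b, eval x q = b := ⟨_, rfl⟩
  obtain ⟨c, hc0⟩ : ∃ c, eval x N1 = c := ⟨_, rfl⟩
  obtain ⟨d, hd0⟩ : ∃ d, eval x (derivative N1) = d := ⟨_, rfl⟩
  obtain ⟨e, he0⟩ : ∃ e, eval x (derivative q) = e := ⟨_, rfl⟩
  rw [ha0, hb0, hc0, hd0, he0] at key ⊢
  rw [ha0] at hpx
  rw [hb0] at hqx
  field_simp [hx0, hpx, hqx] at key
  have hD : ((b ^ 2) ^ 2 * a * (b ^ 2 * x) * (b ^ 2 * x) * b ^ 3) ≠ 0 := by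
    have hb2 : (b : ℂ) ^ 2 ≠ 0 := pow_ne_zero _ hqx
    exact mul_ne_zero (mul_ne_zero (mul_ne_zero (mul_ne_zero (pow_ne_zero _ hb2) hpx)
      (mul_ne_zero hb2 hx0)) (mul_ne_zero hb2 hx0)) (pow_ne_zero _ hqx)
  have key3 : (x * a * d * b - 2 * x * a * e * c - x * c ^ 2 + a * b * c
      - a * b * (4 * Θ0 * a ^ 2 + 4 * (1 - Θinf) * b ^ 2) - 4 * x * a ^ 4 + 4 * x * b ^ 4)
      * (a * x * b ^ 12) = 0 := by linear_combination (a * x * b ^ 12) * key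
  have hxb : (a * x * b ^ 12 : ℂ) ≠ 0 := mul_ne_zero (mul_ne_zero hpx hx0) (pow_ne_zero _ hqx)
  have key4 := (mul_eq_zero.mp key3).resolve_right hxb
  linear_combination key4

/-- From the polynomial identity, the residue relation at the origin. -/
lemma PIII_residue_relation (Θ0 Θinf : ℂ) (p q : Polynomial ℂ)
    (hP : X * p * (derivative (derivative p * q - p * derivative q) * q
        - 2 * derivative q * (derivative p * q - p * derivative q))
      - X * (derivative p * q - p * derivative q) ^ 2
      + p * q * (derivative p * q - p * derivative q)
      - p * q * (C (4 * Θ0) * p ^ 2 + C (4 * (1 - Θinf)) * q ^ 2)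
      - 4 * X * p ^ 4 + 4 * X * q ^ 4 = 0)
    (hpole : q.eval 0 = 0) (hp0 : p.eval 0 ≠ 0) :
    p.eval 0 + Θ0 * (derivative q).eval 0 = 0 := by
  have h1 := congrArg (fun P : Polynomial ℂ => (derivative P).eval 0) hP
  simp only [derivative_sub, derivative_add, derivative_mul, derivative_X, derivative_C,
    derivative_pow, derivative_ofNat, eval_mul, eval_add, eval_sub, eval_pow, eval_X, eval_C,
    eval_ofNat, eval_zero, hpole, one_mul, mul_zero, zero_mul, mul_one, add_zero, zero_add,
    sub_zero, zero_sub, Nat.cast_ofNat, eval_one] at h1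
  have h2 : (p.eval 0) ^ 3 * (p.eval 0 + Θ0 * (derivative q).eval 0) = 0 := by
    simp only [derivative_zero, eval_zero] at h1
    linear_combination (-(1:ℂ)/4) * h1
  exact (mul_eq_zero.mp h2).resolve_left (pow_ne_zero _ hp0)

/-- If `x = 0` is a pole of a rational solution of Painlevé-III (a root of the
reduced denominator), then it is a simple pole with residue `-Θ0`. -/
theorem pole_at_origin_is_simple_with_residue (Θ0 Θinf : ℂ) (p q : Polynomial ℂ)
    (hsol : IsRatSolutionPIII Θ0 Θinf p q) (hred : IsCoprime p q)
    (hpole : q.eval 0 = 0) :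
    ∃ h : ℂ → ℂ, AnalyticAt ℂ h 0 ∧
      ∀ᶠ x in 𝓝[≠] (0 : ℂ), p.eval x / q.eval x = -Θ0 / x + h x := by
  obtain ⟨hp, hq, hode⟩ := hsol
  -- p(0) ≠ 0 by coprimality
  have hp0 : p.eval 0 ≠ 0 := by
    obtain ⟨a, b, hab⟩ := hred
    intro h0
    have := congrArg (fun f : Polynomial ℂ => f.eval 0) hab
    simp [h0, hpole] at this
  have hP := PIII_poly_identity Θ0 Θinf p q hp hq hode
  have hrel := PIII_residue_relation Θ0 Θinf p q hP hpole hp0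
  set B : ℂ := (derivative q).eval 0 with hB
  have hB0 : B ≠ 0 := by
    intro h0
    rw [h0, mul_zero, add_zero] at hrel
    exact hp0 hrel
  -- factor q = X * r
  set r : Polynomial ℂ := q.divX with hr
  have hq_eq : q = X * r := by
    have := X_mul_divX_add q
    rw [coeff_zero_eq_eval_zero, hpole, map_zero, add_zero] at this
    exact this.symm
  have hr0 : r.eval 0 = B := by
    have h1 : r.eval 0 = q.coeff 1 := by
      rw [← coeff_zero_eq_eval_zero, hr, coeff_divX]
    have h2 : B = q.coeff 1 := by
      rw [hB, ← coeff_zero_eq_eval_zero, coeff_derivative]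
      simp
    rw [h1, h2]
  -- define w with p + Θ0 * r = X * w
  set g : Polynomial ℂ := p + C Θ0 * r with hg
  have hg0 : g.eval 0 = 0 := by
    simp only [hg, eval_add, eval_mul, eval_C, hr0]
    linear_combination hrel
  set w : Polynomial ℂ := g.divX with hw
  have hg_eq : g = X * w := by
    have := X_mul_divX_add g
    rw [coeff_zero_eq_eval_zero, hg0, map_zero, add_zero] at this
    exact this.symm
  refine ⟨fun x => w.eval x / r.eval x, ?_, ?_⟩
  · have hwa : AnalyticAt ℂ (fun x : ℂ => w.eval x) 0 := by
      have := (analyticAt_id (𝕜 := ℂ) (z := (0:ℂ))).aeval_polynomial w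
      simpa using this
    have hra : AnalyticAt ℂ (fun x : ℂ => r.eval x) 0 := by
      have := (analyticAt_id (𝕜 := ℂ) (z := (0:ℂ))).aeval_polynomial r
      simpa using this
    exact hwa.div hra (by rw [hr0]; exact hB0)
  · have hre : ∀ᶠ x in 𝓝 (0:ℂ), r.eval x ≠ 0 :=
      (r.continuous.continuousAt).eventually_ne (by rw [hr0]; exact hB0)
    filter_upwards [self_mem_nhdsWithin, nhdsWithin_le_nhds hre] with x hx hrx
    have hx0 : x ≠ (0:ℂ) := hx
    have hqx : q.eval x = x * r.eval x := by rw [hq_eq]; simp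
    have hpx : p.eval x = -Θ0 * r.eval x + x * w.eval x := by
      have := congrArg (fun f : Polynomial ℂ => f.eval x) hg_eq
      simp only [hg, eval_add, eval_mul, eval_C, eval_X] at this
      linear_combination this
    rw [hqx, hpx]
    field_simp
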